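/- arXiv:math/0612270 — 2 statements merged into one kernel-verified Lean document; each statement's English description precedes it below -/
import Mathlib

section
/- Let y ∈ ℝ³, v ∈ ℝ³, and for x ≠ y define the 1-form ω̃(y;v) on ℝ³\{y} by ω̃(y;v)(x)(u) = u · ṽ(x), where ṽ(x) = (1/|x−y|²)·(2(v·(x−y)/|x−y|)(x−y)/|x−y| − v). Then for any u ∈ ℝ³, ω̃(y;v)(x)(u) = −v · dI_y(x)(u), where I_y(z) = y + (z−y)/|z−y|² is the inversion in the unit sphere centered at y. -/
noncomputable section

open scoped RealInnerProductSpace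

abbrev E3 := EuclideanSpace ℝ (Fin 3)

/-- The conformal transportation of `v ∈ T_yℝ³` to `x ≠ y`. -/
def confTransport (y v x : E3) : E3 :=
  (‖x - y‖ ^ 2)⁻¹ • ((2 * ⟪v, ‖x - y‖⁻¹ • (x - y)⟫) • (‖x - y‖⁻¹ • (x - y)) - v)

/-- The inversion in the unit sphere centered at `y`. -/
def sphInv (y : E3) (z : E3) : E3 := y + (‖z - y‖ ^ 2)⁻¹ • (z - y)

/-!
Both sides are `‖x - y‖⁻²` times a reflection: `ṽ(x)` is the reflection of `v` in the line
`ℝ (x - y)`, and `dI_y(x)` is the reflection in the hyperplane `(x - y)ᗮ`, as for any inversion.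
These two reflections differ by a sign and are self-adjoint, which moves the reflection from `v`
to `u` at the cost of a sign.
-/

namespace Submodule

variable {F : Type*} [NormedAddCommGroup F] [InnerProductSpace ℝ F]

theorem inner_reflection_comm (K : Submodule ℝ F) [K.HasOrthogonalProjection] (u v : F) :
    ⟪u, K.reflection v⟫ = ⟪K.reflection u, v⟫ := by
  rw [← K.reflection.inner_map_map, reflection_reflection]

theorem inner_reflection_eq_neg_inner_reflection_orthogonal (K : Submodule ℝ F)
    [K.HasOrthogonalProjection] (u v : F) :
    ⟪u, K.reflection v⟫ = -⟪v, Kᗮ.reflection u⟫ := by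
  rw [reflection_orthogonal_apply, inner_neg_right, neg_neg, inner_reflection_comm,
    real_inner_comm]

theorem reflection_span_unit_singleton_apply {e : F} (he : ‖e‖ = 1) (v : F) :
    (ℝ ∙ e).reflection v = (2 * ⟪v, e⟫) • e - v := by
  rw [reflection_apply, starProjection_unit_singleton ℝ he, real_inner_comm, two_smul, two_mul,
    add_smul]

end Submodule

theorem confTransport_eq_smul_reflection {y x : E3} (hxy : x ≠ y) (v : E3) :
    confTransport y v x = (‖x - y‖ ^ 2)⁻¹ • (ℝ ∙ (x - y)).reflection v := by
  have hr : ‖x - y‖ ≠ 0 := norm_ne_zero_iff.mpr (sub_ne_zero.mpr hxy)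
  have hunit : ‖‖x - y‖⁻¹ • (x - y)‖ = 1 := by
    rw [norm_smul, norm_inv, norm_norm, inv_mul_cancel₀ hr]
  rw [confTransport, ← Submodule.reflection_span_unit_singleton_apply hunit]
  congr 3
  exact Submodule.span_singleton_smul_eq (inv_ne_zero hr).isUnit (x - y)

theorem sphInv_eq_inversion (y : E3) : sphInv y = EuclideanGeometry.inversion y 1 := by
  ext1 z
  rw [sphInv, EuclideanGeometry.inversion, dist_eq_norm, one_div, inv_pow, vsub_eq_sub,
    vadd_eq_add, add_comm]

theorem fderiv_sphInv_apply {y x : E3} (hxy : x ≠ y) (u : E3) :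
    fderiv ℝ (sphInv y) x u = (‖x - y‖ ^ 2)⁻¹ • (ℝ ∙ (x - y))ᗮ.reflection u := by
  rw [sphInv_eq_inversion, (EuclideanGeometry.hasFDerivAt_inversion hxy).fderiv, dist_eq_norm,
    one_div, inv_pow]
  rfl

theorem oneForm_eq_neg_inner_pushforward (y v x : E3) (hxy : x ≠ y) (u : E3) :
    ⟪u, confTransport y v x⟫ = -⟪v, fderiv ℝ (sphInv y) x u⟫ := by
  rw [confTransport_eq_smul_reflection hxy, fderiv_sphInv_apply hxy, real_inner_smul_right,
    real_inner_smul_right, Submodule.inner_reflection_eq_neg_inner_reflection_orthogonal, mul_neg]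
end
end

section
/- Let y ∈ ℝ³, v ∈ ℝ³ a vector, and let T be the inversion T(z) = z/|z|² in the unit sphere centered at the origin (assume y ≠ 0 and x ≠ 0, x ≠ y). Then the 1-form ω̃ is conformally invariant: ω̃(T(y); dT(y)(v))(dT(x)(u)) = ω̃(y; v)(u) for all u ∈ ℝ³, where ω̃(y;v)(x)(u) = u·ṽ(x) and ṽ(x) = (1/|x−y|²)(2(v·(x−y)/|x−y|)(x−y)/|x−y| − v). -/
noncomputable section

open scoped RealInnerProductSpace

/-- The inversion in the unit sphere centered at the origin. -/
def unitInv (z : E3) : E3 := (‖z‖ ^ 2)⁻¹ • z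

lemma fderiv_unitInv (z : E3) (hz : z ≠ 0) (w : E3) :
    fderiv ℝ unitInv z w
      = (‖z‖ ^ 2)⁻¹ • w - ((2 * ⟪z, w⟫) / (‖z‖ ^ 2) ^ 2) • z := by
  have hzz : ⟪z, z⟫ ≠ 0 := by
    rw [real_inner_self_eq_norm_sq]
    exact pow_ne_zero 2 (norm_ne_zero_iff.mpr hz)
  have h1 : HasFDerivAt (fun t : E3 => ⟪t, t⟫)
      ((fderivInnerCLM ℝ (z, z)).comp ((ContinuousLinearMap.id ℝ E3).prod
        (ContinuousLinearMap.id ℝ E3))) z :=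
    (hasFDerivAt_id z).inner ℝ (hasFDerivAt_id z)
  have hinv := (hasFDerivAt_inv hzz).comp (f := fun t : E3 => ⟪t, t⟫) z h1
  have h2 := hinv.smul (hasFDerivAt_id z)
  have h3 : unitInv = fun t : E3 => (⟪t, t⟫)⁻¹ • t := by
    funext t; simp only [unitInv, real_inner_self_eq_norm_sq]
  have h2' : HasFDerivAt (fun t : E3 => (⟪t, t⟫)⁻¹ • t)
      ((⟪z, z⟫)⁻¹ • ContinuousLinearMap.id ℝ E3 +
      ((ContinuousLinearMap.smulRight 1 (-(⟪z, z⟫ ^ 2)⁻¹)).comp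
            ((fderivInnerCLM ℝ (z, z)).comp
              ((ContinuousLinearMap.id ℝ E3).prod (ContinuousLinearMap.id ℝ E3)))).smulRight
        z) z := h2
  rw [h3, h2'.fderiv]
  simp only [ContinuousLinearMap.add_apply, ContinuousLinearMap.smul_apply,
    ContinuousLinearMap.id_apply, ContinuousLinearMap.smulRight_apply,
    ContinuousLinearMap.comp_apply, ContinuousLinearMap.prod_apply, fderivInnerCLM_apply,
    ContinuousLinearMap.one_apply, real_inner_self_eq_norm_sq, real_inner_comm w z,
    smul_eq_mul]
  module

lemma confTransport_eq (y v x : E3) (h : x ≠ y) :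
    confTransport y v x
      = (((‖x - y‖ ^ 2) ^ 2)⁻¹ * (2 * ⟪v, x - y⟫)) • (x - y) - (‖x - y‖ ^ 2)⁻¹ • v := by
  have hd : ‖x - y‖ ≠ 0 := norm_ne_zero_iff.mpr (sub_ne_zero.mpr h)
  rw [confTransport, real_inner_smul_right]
  match_scalars <;> ring

lemma norm_unitInv (z : E3) (hz : z ≠ 0) : ‖unitInv z‖ = ‖z‖⁻¹ := by
  have h : ‖z‖ ≠ 0 := norm_ne_zero_iff.mpr hz
  rw [unitInv, norm_smul]
  rw [Real.norm_eq_abs, abs_of_nonneg (by positivity)]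
  field_simp

lemma unitInv_unitInv (z : E3) (hz : z ≠ 0) : unitInv (unitInv z) = z := by
  have h : ‖z‖ ≠ 0 := norm_ne_zero_iff.mpr hz
  rw [unitInv, norm_unitInv z hz, unitInv, smul_smul]
  rw [show ((‖z‖⁻¹ ^ 2)⁻¹ * (‖z‖ ^ 2)⁻¹ : ℝ) = 1 by field_simp]
  exact one_smul _ _

lemma norm_unitInv_sub (x y : E3) (hx : x ≠ 0) (hy : y ≠ 0) :
    ‖unitInv x - unitInv y‖ ^ 2 = ‖x - y‖ ^ 2 / (‖x‖ ^ 2 * ‖y‖ ^ 2) := by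
  have hnx : ‖x‖ ≠ 0 := norm_ne_zero_iff.mpr hx
  have hny : ‖y‖ ≠ 0 := norm_ne_zero_iff.mpr hy
  rw [← real_inner_self_eq_norm_sq, ← real_inner_self_eq_norm_sq (x - y)]
  simp only [unitInv, inner_sub_left, inner_sub_right, real_inner_smul_left,
    real_inner_smul_right]
  simp only [real_inner_self_eq_norm_sq, real_inner_comm y x]
  field_simp
  ring

set_option maxHeartbeats 2000000 in
theorem oneForm_conformal_invariance (y v x u : E3)
    (hy : y ≠ 0) (hx : x ≠ 0) (hxy : x ≠ y) :
    ⟪fderiv ℝ unitInv x u, confTransport (unitInv y) (fderiv ℝ unitInv y v) (unitInv x)⟫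
      = ⟪u, confTransport y v x⟫ := by
  have hX : unitInv x ≠ 0 := by
    intro h; apply hx; rw [← unitInv_unitInv x hx, h, unitInv]; simp
  have hXY : unitInv x ≠ unitInv y := by
    intro h; apply hxy
    rw [← unitInv_unitInv x hx, h, unitInv_unitInv y hy]
  have hnx : ‖x‖ ≠ 0 := norm_ne_zero_iff.mpr hx
  have hny : ‖y‖ ≠ 0 := norm_ne_zero_iff.mpr hy
  have hnd : ‖x - y‖ ≠ 0 := norm_ne_zero_iff.mpr (sub_ne_zero.mpr hxy)
  rw [fderiv_unitInv x hx u, fderiv_unitInv y hy v,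
    confTransport_eq _ _ _ hXY, confTransport_eq _ _ _ hxy,
    norm_unitInv_sub x y hx hy]
  simp only [unitInv, inner_sub_left, inner_sub_right, real_inner_smul_left,
    real_inner_smul_right]
  simp only [real_inner_self_eq_norm_sq,
    real_inner_comm x u, real_inner_comm y u, real_inner_comm x v, real_inner_comm y v,
    real_inner_comm y x, real_inner_comm v u]
  have hkey : (‖x - y‖ : ℝ) ^ 2 = ‖x‖ ^ 2 - 2 * ⟪y, x⟫ + ‖y‖ ^ 2 := by
    rw [norm_sub_sq_real, real_inner_comm]
  rw [hkey]
  have hc : (‖x‖ ^ 2 - 2 * ⟪y, x⟫ + ‖y‖ ^ 2 : ℝ) ≠ 0 := by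
    rw [← hkey]; positivity
  generalize ⟪x, v⟫ = A at *
  generalize ⟪y, v⟫ = B at *
  generalize ⟪x, u⟫ = C at *
  generalize ⟪y, u⟫ = D at *
  generalize ⟪v, u⟫ = P at *
  generalize hs : ⟪y, x⟫ = S at *
  generalize ha : (‖x‖ : ℝ) = a at *
  generalize hb : (‖y‖ : ℝ) = b at *
  field_simp
  ring
end
end
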